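/- arXiv:math-ph/0407017 — 6 statements merged into one kernel-verified Lean document; each statement's English description precedes it below -/
import Mathlib

section
/- Suppose the potential V : ℤ₊ → ℝ satisfies V(m+p) = V(m) for 1 ≤ m ≤ p+q where p ≥ q ≥ 1, and u is a solution of the difference equation u(n+1)+u(n−1)+V(n)u(n) = E u(n). Let U(n) = (u(n+1), u(n)) and ‖U‖_L² = Σ_{n=1}^{L} ‖U(n)‖². If |tr T(p,0;E)| ≤ 2, where T(p,0;E) is the transfer matrix from 0 to p, then ‖U‖²_{2p+q} ≥ (17/16)·‖U‖²_q. -/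
private lemma ch2 (A : Matrix (Fin 2) (Fin 2) ℝ) (hdet : A.det = 1) :
    A * A = A.trace • A - 1 := by
  have h := Matrix.det_fin_two A
  ext i j
  fin_cases i <;> fin_cases j <;>
    simp [Matrix.mul_apply, Fin.sum_univ_two, Matrix.trace_fin_two, Matrix.one_apply] <;>
    nlinarith [h, hdet]

theorem stmt_8 (V : ℕ → ℝ) (E : ℝ) (u : ℕ → ℝ) (p q : ℕ)
    (hq : 1 ≤ q) (hpq : q ≤ p)
    (hper : ∀ m, 1 ≤ m → m ≤ p + q → V (m + p) = V m)
    (hsol : ∀ n, 1 ≤ n → u (n + 1) + u (n - 1) + V n * u n = E * u n)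
    (T : ℕ → Matrix (Fin 2) (Fin 2) ℝ)
    (hT0 : T 0 = 1)
    (hTstep : ∀ n, T (n + 1) = !![E - V (n + 1), -1; 1, 0] * T n)
    (htr : |(T p).trace| ≤ 2) :
    ∑ n ∈ Finset.Icc 1 (2 * p + q), (u n ^ 2 + u (n + 1) ^ 2) ≥
      (17 / 16) * ∑ n ∈ Finset.Icc 1 q, (u n ^ 2 + u (n + 1) ^ 2) := by
  set t : ℝ := (T p).trace with ht
  -- U(n) = T n *ᵥ U(0)
  have hU : ∀ n, u (n + 1) = T n 0 0 * u 1 + T n 0 1 * u 0 ∧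
      u n = T n 1 0 * u 1 + T n 1 1 * u 0 := by
    intro n
    induction n with
    | zero => simp [hT0, Matrix.one_apply]
    | succ n ih =>
      obtain ⟨h1, h2⟩ := ih
      have hs := hsol (n + 1) (by omega)
      simp only [Nat.add_sub_cancel] at hs
      have hrec : u (n + 2) = (E - V (n + 1)) * u (n + 1) - u n := by linarith
      have m00 : T (n + 1) 0 0 = (E - V (n + 1)) * T n 0 0 - T n 1 0 := by
        rw [hTstep]; simp [Matrix.mul_apply, Fin.sum_univ_two]; ring
      have m01 : T (n + 1) 0 1 = (E - V (n + 1)) * T n 0 1 - T n 1 1 := by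
        rw [hTstep]; simp [Matrix.mul_apply, Fin.sum_univ_two]; ring
      have m10 : T (n + 1) 1 0 = T n 0 0 := by
        rw [hTstep]; simp [Matrix.mul_apply, Fin.sum_univ_two]
      have m11 : T (n + 1) 1 1 = T n 0 1 := by
        rw [hTstep]; simp [Matrix.mul_apply, Fin.sum_univ_two]
      constructor
      · rw [show n + 1 + 1 = n + 2 from rfl, hrec, m00, m01, h1, h2]; ring
      · rw [m10, m11, h1]
  -- det T n = 1
  have hdet : ∀ n, (T n).det = 1 := by
    intro n
    induction n with
    | zero => simp [hT0]
    | succ n ih =>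
      rw [hTstep, Matrix.det_mul, ih, mul_one]
      simp [Matrix.det_fin_two_of]
  -- periodicity of transfer matrices
  have hA : ∀ n, n ≤ p + q → T (n + p) = T n * T p := by
    intro n hn
    induction n with
    | zero => simp [hT0]
    | succ n ih =>
      have h1 := ih (by omega)
      have e1 : n + 1 + p = (n + p) + 1 := by omega
      rw [e1, hTstep]
      have hv : V (n + p + 1) = V (n + 1) := by
        have := hper (n + 1) (by omega) (by omega)
        rw [← this]; ring_nf
      rw [hv, h1, hTstep, Matrix.mul_assoc]
  have hB : ∀ n, n ≤ q → T (n + p) = T n * T p ∧ T (n + 2 * p) = T (n + p) * T p := by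
    intro n hn
    refine ⟨hA n (by omega), ?_⟩
    have := hA (n + p) (by omega)
    rw [show n + 2 * p = n + p + p from by omega, this]
  -- key matrix identity
  have hM : ∀ n, n ≤ q → T (n + 2 * p) = t • T (n + p) - T n := by
    intro n hn
    obtain ⟨h1, h2⟩ := hB n hn
    rw [h2, h1, Matrix.mul_assoc, ch2 (T p) (hdet p)]
    rw [Matrix.mul_sub, Matrix.mul_smul, Matrix.mul_one, ← h1]
  -- scalar identities
  have hkey : ∀ n, n ≤ q → u (n + 2 * p) = t * u (n + p) - u n ∧
      u (n + 2 * p + 1) = t * u (n + p + 1) - u (n + 1) := by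
    intro n hn
    have hm := hM n hn
    obtain ⟨ha1, ha2⟩ := hU n
    obtain ⟨hb1, hb2⟩ := hU (n + p)
    obtain ⟨hc1, hc2⟩ := hU (n + 2 * p)
    have e00 : T (n + 2 * p) 0 0 = t * T (n + p) 0 0 - T n 0 0 := by
      rw [hm]; simp [Matrix.sub_apply]
    have e01 : T (n + 2 * p) 0 1 = t * T (n + p) 0 1 - T n 0 1 := by
      rw [hm]; simp [Matrix.sub_apply]
    have e10 : T (n + 2 * p) 1 0 = t * T (n + p) 1 0 - T n 1 0 := by
      rw [hm]; simp [Matrix.sub_apply]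
    have e11 : T (n + 2 * p) 1 1 = t * T (n + p) 1 1 - T n 1 1 := by
      rw [hm]; simp [Matrix.sub_apply]
    constructor
    · rw [hc2, e10, e11, hb2, ha2]; ring
    · rw [hc1, e00, e01, hb1, ha1]; ring
  have ht2 : t ^ 2 ≤ 4 := by
    have := abs_le.mp htr
    nlinarith [this.1, this.2]
  -- pointwise bound
  have hpt : ∀ n, n ≤ q →
      u n ^ 2 + u (n + 1) ^ 2 ≤
        5 * ((u (n + p) ^ 2 + u (n + p + 1) ^ 2) +
             (u (n + 2 * p) ^ 2 + u (n + 2 * p + 1) ^ 2)) := by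
    intro n hn
    obtain ⟨h1, h2⟩ := hkey n hn
    have scalar : ∀ x y : ℝ, (t * x - y) ^ 2 ≤ 5 * (x ^ 2 + y ^ 2) := by
      intro x y
      nlinarith [sq_nonneg (x + t * y), mul_nonneg (by nlinarith : (0:ℝ) ≤ 4 - t ^ 2)
        (by positivity : (0:ℝ) ≤ x ^ 2 + y ^ 2)]
    have b1 : u n ^ 2 ≤ 5 * (u (n + p) ^ 2 + u (n + 2 * p) ^ 2) := by
      have : u n = t * u (n + p) - u (n + 2 * p) := by linarith
      rw [this]; exact scalar _ _
    have b2 : u (n + 1) ^ 2 ≤ 5 * (u (n + p + 1) ^ 2 + u (n + 2 * p + 1) ^ 2) := by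
      have : u (n + 1) = t * u (n + p + 1) - u (n + 2 * p + 1) := by linarith
      rw [this]; exact scalar _ _
    linarith
  -- sums
  set a : ℕ → ℝ := fun n => u n ^ 2 + u (n + 1) ^ 2 with ha
  have hanneg : ∀ n, 0 ≤ a n := fun n => by positivity
  have hS : ∑ n ∈ Finset.Icc 1 q, a n ≤
      5 * ((∑ n ∈ Finset.Icc 1 q, a (n + p)) + ∑ n ∈ Finset.Icc 1 q, a (n + 2 * p)) := by
    rw [← Finset.sum_add_distrib, Finset.mul_sum]
    apply Finset.sum_le_sum
    intro n hn
    simp only [Finset.mem_Icc] at hn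
    have := hpt n hn.2
    simp only [ha]
    linarith [this]
  have hsub : (Finset.Icc 1 q ∪ Finset.Icc (p + 1) (p + q)) ∪
      Finset.Icc (2 * p + 1) (2 * p + q) ⊆ Finset.Icc 1 (2 * p + q) := by
    intro x hx
    simp only [Finset.mem_union, Finset.mem_Icc] at hx ⊢
    omega
  have hd1 : Disjoint (Finset.Icc 1 q) (Finset.Icc (p + 1) (p + q)) := by
    rw [Finset.disjoint_left]
    intro x hx hy
    simp only [Finset.mem_Icc] at hx hy
    omega
  have hd2 : Disjoint (Finset.Icc 1 q ∪ Finset.Icc (p + 1) (p + q))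
      (Finset.Icc (2 * p + 1) (2 * p + q)) := by
    rw [Finset.disjoint_left]
    intro x hx hy
    simp only [Finset.mem_union, Finset.mem_Icc] at hx hy
    omega
  have hshift1 : ∑ n ∈ Finset.Icc (p + 1) (p + q), a n = ∑ n ∈ Finset.Icc 1 q, a (n + p) := by
    rw [← Finset.map_add_left_Icc, Finset.sum_map]
    apply Finset.sum_congr rfl
    intro x _
    simp [addLeftEmbedding, Nat.add_comm]
  have hshift2 : ∑ n ∈ Finset.Icc (2 * p + 1) (2 * p + q), a n
      = ∑ n ∈ Finset.Icc 1 q, a (n + 2 * p) := by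
    rw [← Finset.map_add_left_Icc, Finset.sum_map]
    apply Finset.sum_congr rfl
    intro x _
    simp [addLeftEmbedding, Nat.add_comm]
  have htot : (∑ n ∈ Finset.Icc 1 q, a n) + (∑ n ∈ Finset.Icc 1 q, a (n + p))
      + (∑ n ∈ Finset.Icc 1 q, a (n + 2 * p)) ≤ ∑ n ∈ Finset.Icc 1 (2 * p + q), a n := by
    rw [← hshift1, ← hshift2, ← Finset.sum_union hd1, ← Finset.sum_union hd2]
    exact Finset.sum_le_sum_of_subset_of_nonneg hsub (fun i _ _ => hanneg i)
  have hS0 : 0 ≤ ∑ n ∈ Finset.Icc 1 q, a n :=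
    Finset.sum_nonneg (fun i _ => hanneg i)
  show (17 / 16) * ∑ n ∈ Finset.Icc 1 q, a n ≤ ∑ n ∈ Finset.Icc 1 (2 * p + q), a n
  linarith
end

section
/- More generally, under the periodicity hypothesis V(m+p)=V(m) for 1 ≤ m ≤ p+q with p ≥ q, every solution u of the difference equation satisfies ‖U‖²_{2p+q} ≥ (1 + (1/max{2, 2|tr T(p,0;E)|})²)·‖U‖²_q. -/
open Finset Matrix

lemma ch2_s9 (M : Matrix (Fin 2) (Fin 2) ℝ) (hd : M.det = 1) :
    M * M = M.trace • M - 1 := by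
  have := Matrix.det_fin_two M
  ext i j
  fin_cases i <;> fin_cases j <;>
    simp [Matrix.mul_apply, Fin.sum_univ_two, Matrix.trace_fin_two, Matrix.one_apply] <;>
    nlinarith [hd, this]

theorem stmt_9 (V : ℕ → ℝ) (E : ℝ) (u : ℕ → ℝ) (p q : ℕ)
    (hq : 1 ≤ q) (hpq : q ≤ p)
    (hper : ∀ m, 1 ≤ m → m ≤ p + q → V (m + p) = V m)
    (hsol : ∀ n, 1 ≤ n → u (n + 1) + u (n - 1) + V n * u n = E * u n)
    (T : ℕ → Matrix (Fin 2) (Fin 2) ℝ)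
    (hT0 : T 0 = 1)
    (hTstep : ∀ n, T (n + 1) = !![E - V (n + 1), -1; 1, 0] * T n) :
    ∑ n ∈ Finset.Icc 1 (2 * p + q), (u n ^ 2 + u (n + 1) ^ 2) ≥
      (1 + (1 / max 2 (2 * |(T p).trace|)) ^ 2) * ∑ n ∈ Finset.Icc 1 q, (u n ^ 2 + u (n + 1) ^ 2) := by
  set t := (T p).trace with ht
  set c := max 2 (2 * |t|) with hc
  have hc2 : (2:ℝ) ≤ c := le_max_left _ _
  have hct : 2 * |t| ≤ c := le_max_right _ _
  have hc0 : (0:ℝ) < c := by linarith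
  -- determinant
  have hdet : ∀ n, (T n).det = 1 := by
    intro n
    induction n with
    | zero => simp [hT0]
    | succ n ih =>
      rw [hTstep n, Matrix.det_mul, ih, Matrix.det_fin_two_of]
      ring
  -- solution vector
  have hU : ∀ n, T n *ᵥ ![u 1, u 0] = ![u (n+1), u n] := by
    intro n
    induction n with
    | zero => simp [hT0]
    | succ n ih =>
      have hs := hsol (n+1) (by omega)
      simp only [Nat.add_sub_cancel] at hs
      rw [hTstep n, ← Matrix.mulVec_mulVec, ih]
      funext i
      fin_cases i <;>
        simp [Matrix.mulVec, dotProduct, Fin.sum_univ_two] <;> linarith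
  -- periodicity of transfer matrices
  have hTper : ∀ n, n ≤ p + q → T (n + p) = T n * T p := by
    intro n
    induction n with
    | zero => intro; simp [hT0]
    | succ n ih =>
      intro hn
      have h1 : n + 1 + p = (n + p) + 1 := by ring
      rw [h1, hTstep (n+p), ih (by omega), hTstep n]
      have : V (n + p + 1) = V (n + 1) := by
        have := hper (n+1) (by omega) hn
        rw [← this]; ring_nf
      rw [this, Matrix.mul_assoc]
  -- Cayley-Hamilton consequence
  have hCH : T p * T p = t • T p - 1 := ch2_s9 _ (hdet p)
  -- key recurrence
  have hkey : ∀ n, n ≤ q →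
      (∀ i : Fin 2, (![u (n+2*p+1), u (n+2*p)] : Fin 2 → ℝ) i
        = t * (![u (n+p+1), u (n+p)] : Fin 2 → ℝ) i - (![u (n+1), u n] : Fin 2 → ℝ) i) := by
    intro n hn
    have e1 : T (n + 2*p) = T n * (T p * T p) := by
      have h2 : n + 2*p = (n + p) + p := by ring
      rw [h2, hTper (n+p) (by omega), hTper n (by omega), Matrix.mul_assoc]
    have e2 : T (n + 2*p) *ᵥ ![u 1, u 0]
        = t • (T (n+p) *ᵥ ![u 1, u 0]) - (T n *ᵥ ![u 1, u 0]) := by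
      rw [e1, hCH, hTper n (by omega)]
      rw [Matrix.mul_sub, Matrix.mul_smul, Matrix.mul_one, Matrix.sub_mulVec,
        Matrix.smul_mulVec]
    rw [hU, hU, hU] at e2
    intro i
    fin_cases i
    · simpa using congrFun e2 0
    · simpa using congrFun e2 1
  -- pointwise bound
  have hpt : ∀ n ∈ Ioc 0 q, u n ^ 2 + u (n+1) ^ 2
      ≤ (c^2/2) * ((u (n+p) ^ 2 + u (n+p+1) ^ 2) + (u (n+2*p) ^ 2 + u (n+2*p+1) ^ 2)) := by
    intro n hn
    simp only [mem_Ioc] at hn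
    have h0 := hkey n hn.2 1
    have h1 := hkey n hn.2 0
    simp only [Matrix.cons_val_zero, Matrix.cons_val_one, Matrix.head_cons] at h0 h1
    have hun : u n = t * u (n+p) - u (n+2*p) := by linarith
    have hun1 : u (n+1) = t * u (n+p+1) - u (n+2*p+1) := by linarith
    have h4t : 4 * t^2 ≤ c^2 := by nlinarith [abs_nonneg t, sq_abs t]
    have h4 : (4:ℝ) ≤ c^2 := by nlinarith
    rw [hun, hun1]
    nlinarith [sq_nonneg (t * u (n+p) + u (n+2*p)), sq_nonneg (t * u (n+p+1) + u (n+2*p+1)),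
      sq_nonneg (u (n+p)), sq_nonneg (u (n+2*p)), sq_nonneg (u (n+p+1)), sq_nonneg (u (n+2*p+1))]
  set f : ℕ → ℝ := fun n => u n ^ 2 + u (n+1) ^ 2 with hf
  have hfnn : ∀ n, 0 ≤ f n := fun n => by positivity
  -- sums
  have hIcc : ∀ a : ℕ, Finset.Icc 1 a = Finset.Ioc 0 a := fun a => rfl
  have hshift : ∀ r : ℕ, ∑ n ∈ Ioc 0 q, f (n + r) = ∑ n ∈ Ioc r (q + r), f n := by
    intro r
    rw [show Finset.Ioc r (q + r) = Finset.Ioc (0 + r) (q + r) by rw [Nat.zero_add],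
      ← Finset.map_add_right_Ioc 0 q r, Finset.sum_map]
    rfl
  have hsplit : ∑ n ∈ Ioc 0 q, f n + ∑ n ∈ Ioc q (2*p+q), f n = ∑ n ∈ Ioc 0 (2*p+q), f n :=
    Finset.sum_Ioc_consecutive f (by omega) (by omega)
  have hsub : Ioc p (q+p) ∪ Ioc (2*p) (q+2*p) ⊆ Ioc q (2*p+q) := by
    intro x hx
    simp only [Finset.mem_union, Finset.mem_Ioc] at hx ⊢
    omega
  have hdisj : Disjoint (Ioc p (q+p)) (Ioc (2*p) (q+2*p)) := by
    rw [Finset.disjoint_left]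
    intro x hx hx'
    simp only [Finset.mem_Ioc] at hx hx'
    omega
  have hmain : ∑ n ∈ Ioc 0 q, f n ≤ (c^2/2) * ∑ n ∈ Ioc q (2*p+q), f n := by
    calc ∑ n ∈ Ioc 0 q, f n
        ≤ ∑ n ∈ Ioc 0 q, (c^2/2) * (f (n+p) + f (n+2*p)) := Finset.sum_le_sum hpt
      _ = (c^2/2) * (∑ n ∈ Ioc p (q+p), f n + ∑ n ∈ Ioc (2*p) (q+2*p), f n) := by
          rw [← hshift p, ← hshift (2*p), ← Finset.mul_sum, Finset.sum_add_distrib]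
      _ = (c^2/2) * ∑ n ∈ Ioc p (q+p) ∪ Ioc (2*p) (q+2*p), f n := by
          rw [Finset.sum_union hdisj]
      _ ≤ (c^2/2) * ∑ n ∈ Ioc q (2*p+q), f n := by
          apply mul_le_mul_of_nonneg_left _ (by positivity)
          exact Finset.sum_le_sum_of_subset_of_nonneg hsub (fun i _ _ => hfnn i)
  rw [ge_iff_le, hIcc, hIcc, ← hsplit]
  have hSq : 0 ≤ ∑ n ∈ Ioc 0 q, f n := Finset.sum_nonneg fun n _ => hfnn n
  have hR : (1/c)^2 * ∑ n ∈ Ioc 0 q, f n ≤ ∑ n ∈ Ioc q (2*p+q), f n := by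
    have hRnn : 0 ≤ ∑ n ∈ Ioc q (2*p+q), f n := Finset.sum_nonneg fun n _ => hfnn n
    rw [div_pow, one_pow, div_mul_eq_mul_div, div_le_iff₀ (by positivity)]
    nlinarith [hmain, hRnn, sq_nonneg c]
  nlinarith [hR, hSq]
end

section
/- Let s₋₁ = b, s₀ = a, s₁ = s₀^{a₁−1} s₋₁, and sₙ = s_{n−1}^{aₙ} s_{n−2} for n ≥ 2, where aₙ ∈ ℤ₊, be the Sturmian words over a two-letter alphabet. Then for every n ≥ 2, sₙ s_{n+1} = s_{n+1} s_{n−1}^{aₙ−1} s_{n−2} s_{n−1}. -/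
theorem aux_10 {M : Type*} [Monoid M] (P Q : M) (b k : ℕ) :
    (P ^ (k + 1) * Q) * ((P ^ (k + 1) * Q) ^ b * P)
      = (P ^ (k + 1) * Q) ^ b * P * P ^ k * Q * P := by
  rw [← mul_assoc, ← pow_mul_comm', pow_succ']
  simp [mul_assoc]

theorem stmt_10 {α : Type*} (la lb : α) (a : ℕ → ℕ) (ha : ∀ n, 1 ≤ a n)
    (sm1 : FreeMonoid α) (s : ℕ → FreeMonoid α)
    (hsm1 : sm1 = FreeMonoid.of lb)
    (hs0 : s 0 = FreeMonoid.of la)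
    (hs1 : s 1 = (s 0) ^ (a 1 - 1) * sm1)
    (hsn : ∀ n, 2 ≤ n → s n = (s (n - 1)) ^ (a n) * s (n - 2)) :
    ∀ n, 2 ≤ n → s n * s (n + 1) = s (n + 1) * (s (n - 1)) ^ (a n - 1) * s (n - 2) * s (n - 1) := by
  intro n hn
  have h1 := hsn n hn
  have h2 := hsn (n + 1) (by omega)
  rw [show n + 1 - 1 = n from by omega, show n + 1 - 2 = n - 1 from by omega] at h2
  have han := ha n
  obtain ⟨k, hk⟩ : ∃ k, a n = k + 1 := ⟨a n - 1, by omega⟩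
  rw [hk] at h1
  rw [hk, Nat.add_sub_cancel, h2, h1]
  exact aux_10 _ _ _ _
end

section
/- For every x, u ∈ ℝ and δ > 0, with s = (x−u)/δ, the integral ∫_{−1}^{1} dt / ((t²+1)((t+s)²+1)) is bounded below by c/(s²+1) for some universal constant c > 0. -/
theorem stmt_15 :
    ∃ c : ℝ, 0 < c ∧ ∀ x u δ : ℝ, 0 < δ →
      (∫ t in (-1 : ℝ)..1, 1 / ((t ^ 2 + 1) * ((t + (x - u) / δ) ^ 2 + 1))) ≥
        c / (((x - u) / δ) ^ 2 + 1) := by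
  refine ⟨1 / 4, by norm_num, fun x u δ hδ => ?_⟩
  set s := (x - u) / δ with hs
  have hs1 : (0:ℝ) < s ^ 2 + 1 := by positivity
  have hcont : Continuous fun t : ℝ => 1 / ((t ^ 2 + 1) * ((t + s) ^ 2 + 1)) := by
    apply Continuous.div continuous_const (by continuity)
    intro t; positivity
  have hI : IntervalIntegrable (fun t : ℝ => 1 / ((t ^ 2 + 1) * ((t + s) ^ 2 + 1)))
      MeasureTheory.volume (-1) 1 := hcont.intervalIntegrable _ _
  have key : ∀ t ∈ Set.Icc (-1:ℝ) 1,
      (1 / 8) / (s ^ 2 + 1) ≤ 1 / ((t ^ 2 + 1) * ((t + s) ^ 2 + 1)) := by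
    intro t ht
    rw [div_div]
    apply one_div_le_one_div_of_le (by positivity)
    nlinarith [mul_nonneg (sub_nonneg.2 ht.2) (by linarith [ht.1] : (0:ℝ) ≤ 1 + t),
      sq_nonneg (t - s), sq_nonneg (t + s), sq_nonneg s, sq_nonneg t]
  have hmono := intervalIntegral.integral_mono_on (by norm_num : (-1:ℝ) ≤ 1)
    (intervalIntegrable_const) hI key
  rw [intervalIntegral.integral_const] at hmono
  rw [ge_iff_le]
  calc (1 / 4) / (s ^ 2 + 1) = (1 - (-1)) • ((1 / 8) / (s ^ 2 + 1)) := by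
        rw [smul_eq_mul]; ring
    _ ≤ _ := hmono
end

section
/- Let μ be a probability measure on ℝ, F its Borel transform, A ⊂ ℝ Borel, and for ν > 0 set I(Δ,ν) = ν ∫_Δ (Im F(E+iν))² dE and J(Δ,ν) = ∫_Δ ∫_ℝ ν²/(ν²+(x−y)²) dμ(y) dμ(x). Then there is a universal constant c > 0 such that I(A_δ, δ) ≥ c · J(A, δ), where A_δ is the δ-neighborhood of A. -/
open MeasureTheory Set Function Metric
open scoped ENNReal

/-!
Write `g(E) = Im F(E + iδ) = ∫ δ / ((x - E)² + δ²) dμ(x)`. A Harnack inequality for the Poisson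
kernel gives `g(x) ≤ 3 g(E)` when `|x - E| ≤ δ`, so for `x ∈ A` we get `2δ g(x) ≤ 3 ∫_{B(x,δ)} g`
with `B(x,δ) ⊆ A_δ`. Integrating over `A` against `μ` and swapping the integrals bounds
`2δ ∫_A g dμ` by `3 ∫_{A_δ} g(E) μ(B(E,δ) ∩ A) dE`, and `μ(B(E,δ)) ≤ 2δ g(E)` because the kernel is
at least `1 / (2δ)` on `B(E,δ)`. Hence `J(A, δ) ≤ 3 I(A_δ, δ)`; all integrals are finite because
`∫ g = π μ(ℝ)`.
-/

lemma lintegral_setLIntegral_ball {α : Type*} [PseudoMetricSpace α] [MeasurableSpace α]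
    [OpensMeasurableSpace α] [SecondCountableTopology α] {μ ν : Measure α} [SFinite μ] [SFinite ν]
    {f : α → ℝ≥0∞} (hf : Measurable f) (r : ℝ) :
    ∫⁻ x, ∫⁻ y in ball x r, f y ∂ν ∂μ = ∫⁻ y, f y * μ (ball y r) ∂ν := by
  have hmeas : Measurable (uncurry fun x y => (ball x r).indicator f y) :=
    (hf.comp measurable_snd).indicator
      (measurableSet_lt (measurable_snd.dist measurable_fst) measurable_const)
  simp_rw [← lintegral_indicator measurableSet_ball]
  rw [lintegral_lintegral_swap hmeas.aemeasurable]
  refine lintegral_congr fun y => ?_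
  have hsymm : ∀ x, (ball x r).indicator f y = (ball y r).indicator (fun _ => f y) x := fun x => by
    simp only [indicator, mem_ball, dist_comm]
  simp_rw [hsymm, lintegral_indicator_const measurableSet_ball]

namespace BorelTransform

noncomputable def poissonKernel (δ E x : ℝ) : ℝ := δ / ((x - E) ^ 2 + δ ^ 2)

section Kernel

variable {δ : ℝ}

lemma continuous_uncurry_poissonKernel (hδ : 0 < δ) : Continuous (uncurry (poissonKernel δ)) := by
  unfold poissonKernel
  exact continuous_const.div (by fun_prop) fun p => by positivity

lemma poissonKernel_nonneg (hδ : 0 < δ) (E x : ℝ) : 0 ≤ poissonKernel δ E x := by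
  unfold poissonKernel; positivity

lemma poissonKernel_le (hδ : 0 < δ) (E x : ℝ) : poissonKernel δ E x ≤ δ⁻¹ := by
  unfold poissonKernel
  rw [div_le_iff₀ (by positivity)]
  field_simp
  nlinarith [sq_nonneg (x - E)]

lemma poissonKernel_le_three_mul (hδ : 0 < δ) {x E : ℝ} (h : |x - E| ≤ δ) (y : ℝ) :
    poissonKernel δ x y ≤ 3 * poissonKernel δ E y := by
  have h2 : (x - E) ^ 2 ≤ δ ^ 2 := sq_le_sq' (abs_le.mp h).1 (abs_le.mp h).2
  unfold poissonKernel
  rw [mul_div_assoc', div_le_div_iff₀ (by positivity) (by positivity)]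
  nlinarith [mul_nonneg hδ.le (sq_nonneg (y - 2 * x + E))]

lemma one_le_two_mul_poissonKernel (hδ : 0 < δ) {E y : ℝ} (h : |y - E| < δ) :
    1 ≤ 2 * δ * poissonKernel δ E y := by
  have h2 : (y - E) ^ 2 ≤ δ ^ 2 := sq_le_sq' (abs_lt.mp h).1.le (abs_lt.mp h).2.le
  unfold poissonKernel
  rw [mul_div_assoc', le_div_iff₀ (by positivity)]
  nlinarith

lemma poissonKernel_eq_pi_mul_cauchyPDFReal (hδ : 0 < δ) (E y : ℝ) :
    poissonKernel δ E y = Real.pi * ProbabilityTheory.cauchyPDFReal y δ.toNNReal E := by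
  rw [ProbabilityTheory.cauchyPDFReal_def, Real.coe_toNNReal _ hδ.le, poissonKernel]
  field_simp
  ring

lemma lintegral_ofReal_poissonKernel (hδ : 0 < δ) (y : ℝ) :
    ∫⁻ E, ENNReal.ofReal (poissonKernel δ E y) = ENNReal.ofReal Real.pi := by
  simp_rw [poissonKernel_eq_pi_mul_cauchyPDFReal hδ, ENNReal.ofReal_mul Real.pi_pos.le,
    ← ProbabilityTheory.cauchyPDF_def]
  rw [lintegral_const_mul _ (by fun_prop),
    ProbabilityTheory.lintegral_cauchyPDF_eq_one y (Real.toNNReal_pos.mpr hδ).ne', mul_one]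

end Kernel

/-- `poissonIntegral μ δ E = Im F(E + iδ)` for the Borel transform `F` of `μ`. -/
noncomputable def poissonIntegral (μ : Measure ℝ) (δ E : ℝ) : ℝ≥0∞ :=
  ∫⁻ x, ENNReal.ofReal (poissonKernel δ E x) ∂μ

section PoissonIntegral

variable {μ : Measure ℝ} {δ : ℝ}

lemma measurable_uncurry_ofReal_poissonKernel (hδ : 0 < δ) :
    Measurable (uncurry fun E x => ENNReal.ofReal (poissonKernel δ E x)) :=
  ENNReal.measurable_ofReal.comp (continuous_uncurry_poissonKernel hδ).measurable

lemma measurable_poissonIntegral [SFinite μ] (hδ : 0 < δ) : Measurable (poissonIntegral μ δ) :=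
  (measurable_uncurry_ofReal_poissonKernel hδ).lintegral_prod_right

lemma poissonIntegral_le (hδ : 0 < δ) (E : ℝ) :
    poissonIntegral μ δ E ≤ ENNReal.ofReal δ⁻¹ * μ univ :=
  calc poissonIntegral μ δ E ≤ ∫⁻ _, ENNReal.ofReal δ⁻¹ ∂μ :=
        lintegral_mono fun x => ENNReal.ofReal_le_ofReal (poissonKernel_le hδ E x)
    _ = ENNReal.ofReal δ⁻¹ * μ univ := lintegral_const _

lemma poissonIntegral_ne_top [IsFiniteMeasure μ] (hδ : 0 < δ) (E : ℝ) :
    poissonIntegral μ δ E ≠ ∞ :=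
  ne_top_of_le_ne_top (ENNReal.mul_ne_top ENNReal.ofReal_ne_top (measure_ne_top μ univ))
    (poissonIntegral_le hδ E)

lemma poissonIntegral_le_three_mul (hδ : 0 < δ) {x E : ℝ} (h : |x - E| ≤ δ) :
    poissonIntegral μ δ x ≤ 3 * poissonIntegral μ δ E :=
  calc poissonIntegral μ δ x ≤ ∫⁻ y, 3 * ENNReal.ofReal (poissonKernel δ E y) ∂μ :=
        lintegral_mono fun y => by
          rw [← ENNReal.ofReal_ofNat 3, ← ENNReal.ofReal_mul (by norm_num)]
          exact ENNReal.ofReal_le_ofReal (poissonKernel_le_three_mul hδ h y)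
    _ = 3 * poissonIntegral μ δ E := lintegral_const_mul' _ _ (by norm_num)

lemma measure_ball_le_poissonIntegral (hδ : 0 < δ) (E : ℝ) :
    μ (ball E δ) ≤ ENNReal.ofReal (2 * δ) * poissonIntegral μ δ E :=
  calc μ (ball E δ) = ∫⁻ _ in ball E δ, 1 ∂μ := (setLIntegral_one _).symm
    _ ≤ ∫⁻ y in ball E δ, ENNReal.ofReal (2 * δ) * ENNReal.ofReal (poissonKernel δ E y) ∂μ := by
        refine setLIntegral_mono' measurableSet_ball fun y hy => ?_
        rw [← ENNReal.ofReal_mul (by positivity), ← ENNReal.ofReal_one]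
        exact ENNReal.ofReal_le_ofReal
          (one_le_two_mul_poissonKernel hδ (by rwa [mem_ball, Real.dist_eq] at hy))
    _ ≤ ∫⁻ y, ENNReal.ofReal (2 * δ) * ENNReal.ofReal (poissonKernel δ E y) ∂μ :=
        setLIntegral_le_lintegral _ _
    _ = ENNReal.ofReal (2 * δ) * poissonIntegral μ δ E :=
        lintegral_const_mul' _ _ ENNReal.ofReal_ne_top

lemma lintegral_poissonIntegral [SFinite μ] (hδ : 0 < δ) :
    ∫⁻ E, poissonIntegral μ δ E = ENNReal.ofReal Real.pi * μ univ := by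
  unfold poissonIntegral
  rw [lintegral_lintegral_swap (measurable_uncurry_ofReal_poissonKernel hδ).aemeasurable]
  simp_rw [lintegral_ofReal_poissonKernel hδ]
  exact lintegral_const _

lemma setLIntegral_poissonIntegral_sq_ne_top [IsFiniteMeasure μ] (hδ : 0 < δ) (S : Set ℝ) :
    ∫⁻ E in S, poissonIntegral μ δ E ^ 2 ≠ ∞ := by
  set C := ENNReal.ofReal δ⁻¹ * μ univ
  have hC : C ≠ ∞ := ENNReal.mul_ne_top ENNReal.ofReal_ne_top (measure_ne_top μ univ)
  refine ne_top_of_le_ne_top (b := C * (ENNReal.ofReal Real.pi * μ univ))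
    (ENNReal.mul_ne_top hC (ENNReal.mul_ne_top ENNReal.ofReal_ne_top (measure_ne_top μ univ))) ?_
  calc ∫⁻ E in S, poissonIntegral μ δ E ^ 2 ≤ ∫⁻ E, poissonIntegral μ δ E ^ 2 :=
        setLIntegral_le_lintegral _ _
    _ ≤ ∫⁻ E, C * poissonIntegral μ δ E :=
        lintegral_mono fun E => by rw [sq]; gcongr; exact poissonIntegral_le hδ E
    _ = C * (ENNReal.ofReal Real.pi * μ univ) := by
        rw [lintegral_const_mul' _ _ hC, lintegral_poissonIntegral hδ]

theorem setLIntegral_poissonIntegral_le [SFinite μ] (hδ : 0 < δ) {A : Set ℝ}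
    (hA : MeasurableSet A) :
    ∫⁻ x in A, poissonIntegral μ δ x ∂μ ≤
      3 * ∫⁻ E in thickening δ A, poissonIntegral μ δ E ^ 2 := by
  set g := poissonIntegral μ δ
  set S := thickening δ A
  have hg : Measurable g := measurable_poissonIntegral hδ
  have harnack : ∀ x ∈ A,
      ENNReal.ofReal (2 * δ) * g x ≤ 3 * ∫⁻ E in ball x δ, g E ∂volume.restrict S := by
    intro x hx
    rw [Measure.restrict_restrict measurableSet_ball,
      inter_eq_left.mpr (ball_subset_thickening hx δ)]
    calc ENNReal.ofReal (2 * δ) * g x = ∫⁻ _ in ball x δ, g x := by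
          rw [setLIntegral_const, Real.volume_ball, mul_comm]
      _ ≤ ∫⁻ E in ball x δ, 3 * g E :=
          setLIntegral_mono' measurableSet_ball fun E hE =>
            poissonIntegral_le_three_mul hδ (by rw [abs_sub_comm]; exact (mem_ball.mp hE).le)
      _ = 3 * ∫⁻ E in ball x δ, g E := lintegral_const_mul' _ _ (by norm_num)
  have ball_bound : ∀ E, g E * μ.restrict A (ball E δ) ≤ ENNReal.ofReal (2 * δ) * g E ^ 2 := by
    intro E
    calc g E * μ.restrict A (ball E δ) ≤ g E * (ENNReal.ofReal (2 * δ) * g E) := by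
          gcongr
          exact (Measure.restrict_apply_le _ _).trans (measure_ball_le_poissonIntegral hδ E)
      _ = ENNReal.ofReal (2 * δ) * g E ^ 2 := by ring
  have h2δ : ENNReal.ofReal (2 * δ) ≠ 0 := by simpa using hδ
  refine (ENNReal.mul_le_mul_iff_right h2δ ENNReal.ofReal_ne_top).mp ?_
  calc ENNReal.ofReal (2 * δ) * ∫⁻ x in A, g x ∂μ
      = ∫⁻ x in A, ENNReal.ofReal (2 * δ) * g x ∂μ :=
        (lintegral_const_mul' _ _ ENNReal.ofReal_ne_top).symm
    _ ≤ ∫⁻ x in A, 3 * ∫⁻ E in ball x δ, g E ∂volume.restrict S ∂μ :=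
        setLIntegral_mono' hA harnack
    _ = 3 * ∫⁻ E, g E * μ.restrict A (ball E δ) ∂volume.restrict S := by
        rw [lintegral_const_mul' _ _ (by norm_num), lintegral_setLIntegral_ball hg]
    _ ≤ 3 * ∫⁻ E in S, ENNReal.ofReal (2 * δ) * g E ^ 2 := by
        gcongr 3 * ?_
        exact lintegral_mono ball_bound
    _ = ENNReal.ofReal (2 * δ) * (3 * ∫⁻ E in S, g E ^ 2) := by
        rw [lintegral_const_mul' _ _ ENNReal.ofReal_ne_top]; ring

lemma integral_poissonKernel (hδ : 0 < δ) (E : ℝ) :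
    ∫ x, poissonKernel δ E x ∂μ = (poissonIntegral μ δ E).toReal :=
  integral_eq_lintegral_of_nonneg_ae (ae_of_all _ (poissonKernel_nonneg hδ E))
    ((continuous_uncurry_poissonKernel hδ).uncurry_left E).aestronglyMeasurable

lemma setIntegral_sq_integral_poissonKernel [IsFiniteMeasure μ] (hδ : 0 < δ) (S : Set ℝ) :
    ∫ E in S, (∫ x, δ / ((x - E) ^ 2 + δ ^ 2) ∂μ) ^ 2 =
      (∫⁻ E in S, poissonIntegral μ δ E ^ 2).toReal := by
  rw [← integral_toReal ((measurable_poissonIntegral hδ).pow_const 2).aemeasurable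
    (ae_of_all _ fun E => ENNReal.pow_lt_top (poissonIntegral_ne_top hδ E).lt_top)]
  simp_rw [ENNReal.toReal_pow, ← integral_poissonKernel hδ]
  rfl

lemma setIntegral_integral_sq_div_sq_add_sq [IsFiniteMeasure μ] (hδ : 0 < δ) (A : Set ℝ) :
    ∫ x in A, (∫ y, δ ^ 2 / (δ ^ 2 + (x - y) ^ 2) ∂μ) ∂μ =
      δ * (∫⁻ x in A, poissonIntegral μ δ x ∂μ).toReal := by
  have hkernel : ∀ x y : ℝ, δ ^ 2 / (δ ^ 2 + (x - y) ^ 2) = δ * poissonKernel δ x y := by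
    intro x y
    rw [poissonKernel, mul_div_assoc', div_eq_div_iff (by positivity) (by positivity)]
    ring
  simp_rw [hkernel, integral_const_mul, integral_poissonKernel hδ]
  rw [← integral_toReal (measurable_poissonIntegral hδ).aemeasurable
    (ae_of_all _ fun x => (poissonIntegral_ne_top hδ x).lt_top)]

end PoissonIntegral

end BorelTransform

open BorelTransform

theorem stmt_16 :
    ∃ c : ℝ, 0 < c ∧
      ∀ (μ : Measure ℝ), IsProbabilityMeasure μ →
        ∀ (A : Set ℝ), MeasurableSet A → ∀ δ : ℝ, 0 < δ →
          δ * (∫ E in Metric.thickening δ A, (∫ x, δ / ((x - E) ^ 2 + δ ^ 2) ∂μ) ^ 2) ≥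
            c * ∫ x in A, (∫ y, δ ^ 2 / (δ ^ 2 + (x - y) ^ 2) ∂μ) ∂μ := by
  refine ⟨1 / 3, by norm_num, fun μ _ A hA δ hδ => ?_⟩
  rw [setIntegral_sq_integral_poissonKernel hδ, setIntegral_integral_sq_div_sq_add_sq hδ]
  have key := ENNReal.toReal_mono
    (ENNReal.mul_ne_top ENNReal.ofNat_ne_top (setLIntegral_poissonIntegral_sq_ne_top hδ _))
    (setLIntegral_poissonIntegral_le (μ := μ) hδ hA)
  rw [ENNReal.toReal_mul, ENNReal.toReal_ofNat] at key
  linarith [mul_le_mul_of_nonneg_left key hδ.le]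
end

section
/- Let a(n,T) ≥ 0 with Σ_n a(n,T) = 1 for each T, and suppose the moments M_r(T) = Σ_n |n|^r a(n,T) satisfy a ballistic bound M_r(T) ≤ C(r)·T^r for all r > 0, and M_p(T) ≥ f_p(T) with f_p(T) → ∞. Then for any δ > 0, the outside probability P(T) = Σ_{|n| ≥ (f_p(T)/2)^{1/p}} a(n,T) satisfies P(T) ≥ c·T^{−p(1+δ)}·f_p(T) for T large, for some constant c > 0. -/
open Filter

theorem stmt_18 (a : ℝ → ℤ → ℝ)
    (hpos : ∀ T > (0 : ℝ), ∀ n : ℤ, 0 ≤ a T n)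
    (hsum1 : ∀ T > (0 : ℝ), ∑' n : ℤ, a T n = 1)
    (hsummable : ∀ r > (0 : ℝ), ∀ T > (0 : ℝ), Summable (fun n : ℤ => |(n : ℝ)| ^ r * a T n))
    (C : ℝ → ℝ)
    (hball : ∀ r > (0 : ℝ), ∀ T > (0 : ℝ), (∑' n : ℤ, |(n : ℝ)| ^ r * a T n) ≤ C r * T ^ r)
    (p : ℝ) (hp : 0 < p) (f : ℝ → ℝ) (hfpos : ∀ T > (0 : ℝ), 0 < f T)
    (hlow : ∀ T > (0 : ℝ), (∑' n : ℤ, |(n : ℝ)| ^ p * a T n) ≥ f T)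
    (hfinf : Tendsto f atTop atTop)
    (δ : ℝ) (hδ : 0 < δ) :
    ∃ c > (0 : ℝ), ∃ T₀ : ℝ, ∀ T ≥ T₀, 0 < T →
      (∑' n : {n : ℤ // (f T / 2) ^ (1 / p) ≤ |(n : ℝ)|}, a T n) ≥
        c * T ^ (-(p * (1 + δ))) * f T := by
  set r : ℝ := p * (1 + δ) / δ with hr_def
  have hr : 0 < r := by positivity
  set C' : ℝ := max (C r) 0 with hC'_def
  have hC'0 : 0 ≤ C' := le_max_right _ _
  obtain ⟨T₁, hT₁⟩ := eventually_atTop.mp (hfinf.eventually_ge_atTop (4 * C' + 4))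
  refine ⟨1/4, by norm_num, max T₁ 1, ?_⟩
  intro T hT hTpos
  have hT1 : (1:ℝ) ≤ T := le_trans (le_max_right _ _) hT
  have hfT : 4 * C' + 4 ≤ f T := hT₁ T (le_trans (le_max_left _ _) hT)
  have hfTpos : 0 < f T := hfpos T hTpos
  have hA : Summable (fun n : ℤ => a T n) := by
    by_contra h
    have := hsum1 T hTpos
    rw [tsum_eq_zero_of_not_summable h] at this
    norm_num at this
  have hApos : ∀ n : ℤ, 0 ≤ a T n := hpos T hTpos
  set N : ℝ := T ^ ((1:ℝ) + δ) with hN_def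
  have hN1 : (1:ℝ) ≤ N := Real.one_le_rpow hT1 (by positivity)
  have hNpos : 0 < N := lt_of_lt_of_le one_pos hN1
  set R : ℝ := (f T / 2) ^ (1/p) with hR_def
  set S : Set ℤ := {n : ℤ | R ≤ |(n:ℝ)|} with hS_def
  set F : Set ℤ := {n : ℤ | N < |(n:ℝ)|} with hF_def
  set g : ℤ → ℝ := fun n => |(n:ℝ)| ^ p * a T n with hg_def
  set h : ℤ → ℝ := fun n => |(n:ℝ)| ^ r * a T n with hh_def
  have hg : Summable g := hsummable p hp T hTpos
  have hh : Summable h := hsummable r hr T hTpos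
  -- inside bound
  have step_in : (∑' n, (Sᶜ).indicator g n) ≤ f T / 2 := by
    have hb : ∀ n, (Sᶜ).indicator g n ≤ f T / 2 * a T n := by
      intro n
      by_cases hn : n ∈ Sᶜ
      · rw [Set.indicator_of_mem hn]
        have h1 : |(n:ℝ)| ≤ R := le_of_not_ge hn
        have h2 : |(n:ℝ)| ^ p ≤ R ^ p := Real.rpow_le_rpow (abs_nonneg _) h1 hp.le
        have h3 : R ^ p = f T / 2 := by
          rw [hR_def, ← Real.rpow_mul (by positivity), one_div_mul_cancel hp.ne',
            Real.rpow_one]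
        rw [h3] at h2
        exact mul_le_mul_of_nonneg_right h2 (hApos n)
      · rw [Set.indicator_of_notMem hn]
        exact mul_nonneg (by positivity) (hApos n)
    calc (∑' n, (Sᶜ).indicator g n) ≤ ∑' n, f T / 2 * a T n :=
          Summable.tsum_le_tsum hb (hg.indicator _) (hA.mul_left _)
      _ = f T / 2 := by rw [tsum_mul_left, hsum1 T hTpos, mul_one]
  -- splittings
  have hsplit1 : (∑' n, g n) = (∑' n, (Sᶜ).indicator g n) + ∑' n, S.indicator g n := by
    rw [← Summable.tsum_add (hg.indicator _) (hg.indicator _)]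
    congr 1; funext n
    by_cases hn : n ∈ S <;> simp [Set.indicator_apply, hn]
  have hsplit2 : (∑' n, S.indicator g n)
      = (∑' n, (S ∩ Fᶜ).indicator g n) + ∑' n, (S ∩ F).indicator g n := by
    rw [← Summable.tsum_add (hg.indicator _) (hg.indicator _)]
    congr 1; funext n
    by_cases hn : n ∈ S <;> by_cases hn' : n ∈ F <;>
      simp [Set.indicator_apply, hn, hn']
  -- far bound
  have step_far : (∑' n, (S ∩ F).indicator g n) ≤ C' := by
    have hb : ∀ n, (S ∩ F).indicator g n ≤ N ^ (p - r) * h n := by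
      intro n
      by_cases hn : n ∈ S ∩ F
      · rw [Set.indicator_of_mem hn]
        have hNn : N < |(n:ℝ)| := hn.2
        have hnpos : (0:ℝ) < |(n:ℝ)| := lt_trans hNpos hNn
        have e1 : |(n:ℝ)| ^ p = |(n:ℝ)| ^ (p - r) * |(n:ℝ)| ^ r := by
          rw [← Real.rpow_add hnpos]; ring_nf
        have e2 : |(n:ℝ)| ^ (p - r) ≤ N ^ (p - r) := by
          apply Real.rpow_le_rpow_of_nonpos hNpos hNn.le
          have : p < r := by
            rw [hr_def]
            rw [lt_div_iff₀ hδ]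
            nlinarith
          linarith
        have : |(n:ℝ)| ^ p * a T n ≤ N ^ (p - r) * (|(n:ℝ)| ^ r * a T n) := by
          rw [e1, mul_assoc]
          exact mul_le_mul_of_nonneg_right e2
            (mul_nonneg (Real.rpow_nonneg (abs_nonneg _) _) (hApos n))
        exact this
      · rw [Set.indicator_of_notMem hn]
        have h0 : 0 ≤ h n := mul_nonneg (Real.rpow_nonneg (abs_nonneg _) _) (hApos n)
        exact mul_nonneg (Real.rpow_nonneg hNpos.le _) h0
    have hsum_h : (∑' n, h n) ≤ C' * T ^ r := by
      refine le_trans (hball r hr T hTpos) ?_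
      exact mul_le_mul_of_nonneg_right (le_max_left _ _) (Real.rpow_nonneg hTpos.le r)
    have key : N ^ (p - r) * (C' * T ^ r) = C' := by
      rw [hN_def, ← Real.rpow_mul hTpos.le]
      rw [mul_comm C' (T ^ r), ← mul_assoc, ← Real.rpow_add hTpos]
      have hexp : (1 + δ) * (p - r) + r = 0 := by
        rw [hr_def]; field_simp; ring
      rw [hexp, Real.rpow_zero, one_mul]
    calc (∑' n, (S ∩ F).indicator g n) ≤ ∑' n, N ^ (p - r) * h n :=
          Summable.tsum_le_tsum hb (hg.indicator _) (hh.mul_left _)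
      _ = N ^ (p - r) * ∑' n, h n := tsum_mul_left
      _ ≤ N ^ (p - r) * (C' * T ^ r) :=
          mul_le_mul_of_nonneg_left hsum_h (Real.rpow_nonneg hNpos.le _)
      _ = C' := key
  -- medium bound
  set Q : ℝ := ∑' n, S.indicator (a T) n with hQ_def
  have step_med : (∑' n, (S ∩ Fᶜ).indicator g n) ≤ N ^ p * Q := by
    have hb : ∀ n, (S ∩ Fᶜ).indicator g n ≤ N ^ p * S.indicator (a T) n := by
      intro n
      by_cases hn : n ∈ S ∩ Fᶜ
      · rw [Set.indicator_of_mem hn, Set.indicator_of_mem hn.1]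
        have h1 : |(n:ℝ)| ≤ N := le_of_not_gt hn.2
        have h2 : |(n:ℝ)| ^ p ≤ N ^ p := Real.rpow_le_rpow (abs_nonneg _) h1 hp.le
        exact mul_le_mul_of_nonneg_right h2 (hApos n)
      · rw [Set.indicator_of_notMem hn]
        have h0 : 0 ≤ S.indicator (a T) n := Set.indicator_nonneg (fun i _ => hApos i) n
        exact mul_nonneg (Real.rpow_nonneg hNpos.le _) h0
    calc (∑' n, (S ∩ Fᶜ).indicator g n) ≤ ∑' n, N ^ p * S.indicator (a T) n :=
          Summable.tsum_le_tsum hb (hg.indicator _) ((hA.indicator _).mul_left _)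
      _ = N ^ p * Q := tsum_mul_left
  -- combine
  have hchain : f T ≤ f T / 2 + (N ^ p * Q + C') := by
    have := hlow T hTpos
    calc f T ≤ ∑' n, g n := this
      _ = (∑' n, (Sᶜ).indicator g n) + ∑' n, S.indicator g n := hsplit1
      _ = (∑' n, (Sᶜ).indicator g n)
          + ((∑' n, (S ∩ Fᶜ).indicator g n) + ∑' n, (S ∩ F).indicator g n) := by
            rw [hsplit2]
      _ ≤ f T / 2 + (N ^ p * Q + C') := by
            gcongr
  have hQge : N ^ p * Q ≥ f T / 4 := by linarith
  have hNp : 0 < N ^ p := Real.rpow_pos_of_pos hNpos p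
  have hTexp : T ^ (-(p * (1 + δ))) = (N ^ p)⁻¹ := by
    rw [hN_def, ← Real.rpow_mul hTpos.le, ← Real.rpow_neg hTpos.le]
    ring_nf
  have hgoal : (1/4 : ℝ) * T ^ (-(p * (1 + δ))) * f T ≤ Q := by
    rw [hTexp]
    calc (1/4 : ℝ) * (N ^ p)⁻¹ * f T = (N ^ p)⁻¹ * (f T / 4) := by ring
      _ ≤ (N ^ p)⁻¹ * (N ^ p * Q) :=
          mul_le_mul_of_nonneg_left hQge (inv_nonneg.mpr hNp.le)
      _ = Q := by field_simp
  have hsub : (∑' n : {n : ℤ // (f T / 2) ^ (1 / p) ≤ |(n : ℝ)|}, a T n) = Q := by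
    rw [hQ_def]
    exact tsum_subtype S (a T)
  rw [hsub]
  exact hgoal
end
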